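/- Let (R, m) be a Noetherian local Cohen–Macaulay ring of dimension three with infinite residue field, let I be an m-primary ideal of R, and let q ≥ n(I) be an integer, where n(I) is the postulation number of I. Then the Hilbert coefficients of I^q are given by: e_0(I^q) = q³·e_0(I), e_1(I^q) = q²(q−1)·e_0(I) + q²·e_1(I), e_2(I^q) = binom(q,3)·e_0(I) + binom(q,2)·e_1(I) + q·e_2(I), and e_3(I^q) = e_3(I). -/

import Mathlib

/-!
Since `(I ^ q) ^ n = I ^ (q * n)` and `q * n ≥ q` for `n ≥ 1`, the Hilbert-Samuel function of
`I ^ q` is eventually `n ↦ P(q * n)`, where `P` is the Hilbert polynomial of `I`. Rewriting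
`P(q * n)` in the binomial basis `(n + 2 choose 3), (n + 1 choose 2), n, 1` gives the stated
coefficients, and these are unique because a combination of the basis polynomials that vanishes
for all large `n` is zero.
-/

open Finset IsLocalRing

/-- The length of the `R`-module `R ⧸ I`, as a natural number. -/
noncomputable def lam (R : Type*) [CommRing R] (I : Ideal R) : ℕ :=
  (WithBot.unbotD 0 (Order.krullDim (Submodule R (R ⧸ I)))).toNat

/-- The length of `A / B` (for ideals `B ⊆ A`, realized as the quotient of `A` by `A ∩ B`). -/
noncomputable def lamQ {R : Type*} [CommRing R] (A B : Ideal R) : ℕ :=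
  (WithBot.unbotD 0 (Order.krullDim (Submodule R (A ⧸ (Submodule.comap A.subtype B))))).toNat

/-- `J` is a reduction of `I`. -/
def IsReduction {R : Type*} [CommRing R] (J I : Ideal R) : Prop :=
  J ≤ I ∧ ∃ n : ℕ, I ^ (n + 1) = J * I ^ n

/-- `J` is a minimal reduction of `I`. -/
def IsMinimalReduction {R : Type*} [CommRing R] (J I : Ideal R) : Prop :=
  IsReduction J I ∧ ∀ K : Ideal R, IsReduction K I → K ≤ J → K = J

/-- The depth of a ring `S` with respect to an ideal `J`: the supremum of lengths of
regular sequences contained in `J`. -/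
noncomputable def ringDepth (S : Type*) [CommRing S] (J : Ideal S) : ℕ∞ :=
  sSup {n : ℕ∞ | ∃ rs : List S, (∀ r ∈ rs, r ∈ J) ∧
    RingTheory.Sequence.IsRegular S rs ∧ (rs.length : ℕ∞) = n}

/-- `R` is a Cohen-Macaulay local ring of dimension `d`. -/
def IsCohenMacaulayLocal (R : Type*) [CommRing R] [IsLocalRing R] (d : ℕ) : Prop :=
  ringKrullDim R = d ∧ ringDepth R (maximalIdeal R) = d

/-- The maximal homogeneous ideal of the associated graded ring
`gr_I(R) = R[It]/I·R[It]`. -/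
noncomputable def grMaxIdeal {R : Type*} [CommRing R] [IsLocalRing R] (I : Ideal R) :
    Ideal ((reesAlgebra I) ⧸ (Ideal.map (algebraMap R (reesAlgebra I)) I)) :=
  Ideal.map (Ideal.Quotient.mk _)
    (Ideal.map (algebraMap R (reesAlgebra I)) (maximalIdeal R) ⊔
      RingHom.ker (((Polynomial.aeval (0 : R)).comp (reesAlgebra I).val :
        reesAlgebra I →ₐ[R] R) : reesAlgebra I →+* R))

/-- The depth of the associated graded ring `gr_I(R)` with respect to its maximal
homogeneous ideal. -/
noncomputable def grDepth {R : Type*} [CommRing R] [IsLocalRing R] (I : Ideal R) : ℕ∞ :=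
  ringDepth ((reesAlgebra I) ⧸ (Ideal.map (algebraMap R (reesAlgebra I)) I)) (grMaxIdeal I)

/-- `e` is the sequence of Hilbert coefficients of the `m`-primary ideal `I` in a
`d`-dimensional local ring: for all large `n`,
`λ(R/Iⁿ) = ∑_{j=0}^{d} (-1)^j e_j (n+d-j-1 choose d-j)`. -/
def IsHilbertCoeffs {R : Type*} [CommRing R] (I : Ideal R) (d : ℕ) (e : ℕ → ℤ) : Prop :=
  ∃ N : ℕ, ∀ n : ℕ, N ≤ n → (lam R (I ^ n) : ℤ) =
    ∑ j ∈ Finset.range (d + 1), (-1) ^ j * e j * ((n + d - j - 1).choose (d - j) : ℤ)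

/-- `x` is integral over the ideal `I`: it satisfies an equation
`x^k + a₁x^{k-1} + ⋯ + a_k = 0` with `aᵢ ∈ Iⁱ`. -/
def IsIntegralOverIdeal {R : Type*} [CommRing R] (I : Ideal R) (x : R) : Prop :=
  ∃ k : ℕ, 0 < k ∧ ∃ a : ℕ → R, (∀ i, 1 ≤ i → i ≤ k → a i ∈ I ^ i) ∧
    x ^ k + ∑ i ∈ Finset.Icc 1 k, a i * x ^ (k - i) = 0

/-- `I` is integrally closed. -/
def IsIntegrallyClosedIdeal {R : Type*} [CommRing R] (I : Ideal R) : Prop :=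
  ∀ x : R, IsIntegralOverIdeal I x → x ∈ I

/-- The integral closure of the ideal `I` (the set of elements integral over `I` is an
ideal, so taking the span does not change it). -/
noncomputable def intClosure {R : Type*} [CommRing R] (I : Ideal R) : Ideal R :=
  Ideal.span {x | IsIntegralOverIdeal I x}

def hilbertSum (d : ℕ) (e : ℕ → ℤ) (n : ℕ) : ℤ :=
  ∑ j ∈ range (d + 1), (-1) ^ j * e j * ((n + d - j - 1).choose (d - j) : ℤ)

lemma hilbertSum_sub (d : ℕ) (e e' : ℕ → ℤ) (n : ℕ) :
    hilbertSum d (e - e') n = hilbertSum d e n - hilbertSum d e' n := by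
  simp only [hilbertSum, ← sum_sub_distrib, Pi.sub_apply]
  exact sum_congr rfl fun _ _ => by ring

lemma hilbertSum_succ_sub (d : ℕ) (c : ℕ → ℤ) (n : ℕ) :
    hilbertSum (d + 1) c (n + 1) - hilbertSum (d + 1) c n = hilbertSum d c (n + 1) := by
  have hlast : ∀ m : ℕ, ((m + (d + 1) - (d + 1) - 1).choose (d + 1 - (d + 1)) : ℤ) = 1 := by
    simp
  rw [hilbertSum, hilbertSum, sum_range_succ _ (d + 1), sum_range_succ _ (d + 1), hlast, hlast,
    add_sub_add_right_eq_sub, hilbertSum, ← sum_sub_distrib]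
  refine sum_congr rfl fun j hj => ?_
  obtain ⟨k, rfl⟩ := Nat.exists_eq_add_of_le (Nat.lt_succ_iff.1 (mem_range.1 hj))
  have hpascal := Nat.choose_succ_succ' (n + k) k
  rw [show n + 1 + (j + k + 1) - j - 1 = n + k + 1 by omega,
    show n + (j + k + 1) - j - 1 = n + k by omega, show j + k + 1 - j = k + 1 by omega,
    show n + 1 + (j + k) - j - 1 = n + k by omega, show j + k - j = k by omega, hpascal]
  push_cast
  ring

lemma hilbertSum_eq_of_forall_lt (d : ℕ) (c : ℕ → ℤ) (hc : ∀ j < d, c j = 0) (n : ℕ) :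
    hilbertSum d c n = (-1) ^ d * c d := by
  rw [hilbertSum, sum_range_succ, sum_eq_zero fun j hj => by simp [hc j (mem_range.1 hj)]]
  simp

/-- Taking finite differences lowers `d` by one (`hilbertSum_succ_sub`), so induction on `d`
works. -/
lemma eq_zero_of_hilbertSum_eventually_eq_zero {d : ℕ} {c : ℕ → ℤ}
    (h : ∀ᶠ n in Filter.atTop, hilbertSum d c n = 0) : ∀ j ≤ d, c j = 0 := by
  induction d with
  | zero =>
    obtain ⟨n, hn⟩ := h.exists
    simpa [hilbertSum_eq_of_forall_lt 0 c (by simp)] using hn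
  | succ d ih =>
    obtain ⟨N, hN⟩ := Filter.eventually_atTop.1 h
    have hlow : ∀ j ≤ d, c j = 0 := ih <| Filter.eventually_atTop.2 ⟨N + 1, fun n hn => by
      obtain ⟨m, rfl⟩ : ∃ m, n = m + 1 := ⟨n - 1, by omega⟩
      rw [← hilbertSum_succ_sub, hN _ (by omega), hN _ (by omega), sub_zero]⟩
    have hn := hN N le_rfl
    rw [hilbertSum_eq_of_forall_lt _ c fun j hj => hlow j (Nat.lt_succ_iff.1 hj)] at hn
    intro j hj
    rcases Nat.lt_or_eq_of_le hj with hj | rfl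
    · exact hlow j (Nat.lt_succ_iff.1 hj)
    · simpa using hn

lemma IsHilbertCoeffs.eq {R : Type*} [CommRing R] {I : Ideal R} {d : ℕ} {e e' : ℕ → ℤ}
    (h : IsHilbertCoeffs I d e) (h' : IsHilbertCoeffs I d e') {j : ℕ} (hj : j ≤ d) :
    e j = e' j := by
  obtain ⟨N, hN⟩ := h
  obtain ⟨N', hN'⟩ := h'
  refine sub_eq_zero.1 (eq_zero_of_hilbertSum_eventually_eq_zero (c := e - e') ?_ j hj)
  filter_upwards [Filter.eventually_ge_atTop (max N N')] with n hn
  rw [hilbertSum_sub, sub_eq_zero, hilbertSum, hilbertSum, ← hN n (le_of_max_le_left hn),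
    hN' n (le_of_max_le_right hn)]

lemma Nat.cast_choose_two_mul (n : ℕ) : (n.choose 2 : ℤ) * 2 = n * (n - 1) := by
  induction n with
  | zero => simp
  | succ k ih =>
    rw [Nat.choose_succ_succ, Nat.choose_one_right]
    push_cast
    linear_combination ih

lemma Nat.cast_choose_three_mul (n : ℕ) : (n.choose 3 : ℤ) * 6 = n * (n - 1) * (n - 2) := by
  induction n with
  | zero => simp
  | succ k ih =>
    rw [Nat.choose_succ_succ]
    push_cast
    linear_combination ih + 3 * Nat.cast_choose_two_mul k

/-- The coefficients obtained by substituting `q * n` for `n` in `hilbertSum 3 e n`. -/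
def hilbertCoeffsPow (e : ℕ → ℤ) (q : ℕ) : ℕ → ℤ
  | 0 => (q : ℤ) ^ 3 * e 0
  | 1 => (q : ℤ) ^ 2 * ((q : ℤ) - 1) * e 0 + (q : ℤ) ^ 2 * e 1
  | 2 => (q.choose 3 : ℤ) * e 0 + (q.choose 2 : ℤ) * e 1 + (q : ℤ) * e 2
  | _ => e 3

lemma hilbertSum_three_mul (e : ℕ → ℤ) (q n : ℕ) :
    hilbertSum 3 e (q * n) = hilbertSum 3 (hilbertCoeffsPow e q) n := by
  simp only [hilbertSum, sum_range_succ, sum_range_zero, hilbertCoeffsPow]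
  norm_num [Nat.choose_one_right]
  refine mul_left_cancel₀ (show (6 : ℤ) ≠ 0 by norm_num) ?_
  linear_combination (norm := (push_cast; ring1))
    e 0 * Nat.cast_choose_three_mul (q * n + 2) - 3 * e 1 * Nat.cast_choose_two_mul (q * n + 1)
    - q ^ 3 * e 0 * Nat.cast_choose_three_mul (n + 2)
    + 3 * (q ^ 2 * e 1 + q ^ 2 * (q - 1) * e 0) * Nat.cast_choose_two_mul (n + 1)
    - e 0 * n * Nat.cast_choose_three_mul q - 3 * e 1 * n * Nat.cast_choose_two_mul q

theorem stmt_17_general {R : Type*} [CommRing R]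
    (I : Ideal R)
    (e : ℕ → ℤ) (q : ℕ)
    (hq : ∀ n : ℕ, q ≤ n → (lam R (I ^ n) : ℤ) =
      ∑ j ∈ Finset.range 4, (-1) ^ j * e j * ((n + 3 - j - 1).choose (3 - j) : ℤ))
    (ε : ℕ → ℤ) (hε : IsHilbertCoeffs (I ^ q) 3 ε) :
    ε 0 = (q : ℤ) ^ 3 * e 0 ∧
    ε 1 = (q : ℤ) ^ 2 * ((q : ℤ) - 1) * e 0 + (q : ℤ) ^ 2 * e 1 ∧
    ε 2 = (q.choose 3 : ℤ) * e 0 + (q.choose 2 : ℤ) * e 1 + (q : ℤ) * e 2 ∧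
    ε 3 = e 3 := by
  have hpow : IsHilbertCoeffs (I ^ q) 3 (hilbertCoeffsPow e q) :=
    ⟨1, fun n hn => by
      rw [← pow_mul, hq (q * n) (Nat.le_mul_of_pos_right q hn)]
      exact hilbertSum_three_mul e q n⟩
  exact ⟨hε.eq hpow (by norm_num), hε.eq hpow (by norm_num), hε.eq hpow (by norm_num),
    hε.eq hpow le_rfl⟩

/-- **(From the proof of Theorem 4.1), Corso–Polini–Rossi.**
Let `(R, m)` be a three-dimensional local Cohen-Macaulay ring with infinite residue
field, `I` an `m`-primary ideal, and `q ≥ n(I)` (`q` being at least the postulation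
number means exactly that the Hilbert polynomial equals the Hilbert-Samuel function at
all `n ≥ q`). Then the Hilbert coefficients `ε_i = e_i(I^q)` are given by
`ε₀ = q³e₀`, `ε₁ = q²(q−1)e₀ + q²e₁`, `ε₂ = C(q,3)e₀ + C(q,2)e₁ + qe₂`, `ε₃ = e₃`. -/
theorem stmt_17 {R : Type*} [CommRing R] [IsNoetherianRing R] [IsLocalRing R]
    [Infinite (ResidueField R)] (hCM : IsCohenMacaulayLocal R 3)
    (I : Ideal R) (hI : I.radical = maximalIdeal R)
    (e : ℕ → ℤ) (q : ℕ)
    (hq : ∀ n : ℕ, q ≤ n → (lam R (I ^ n) : ℤ) =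
      ∑ j ∈ Finset.range 4, (-1) ^ j * e j * ((n + 3 - j - 1).choose (3 - j) : ℤ))
    (ε : ℕ → ℤ) (hε : IsHilbertCoeffs (I ^ q) 3 ε) :
    ε 0 = (q : ℤ) ^ 3 * e 0 ∧
    ε 1 = (q : ℤ) ^ 2 * ((q : ℤ) - 1) * e 0 + (q : ℤ) ^ 2 * e 1 ∧
    ε 2 = (q.choose 3 : ℤ) * e 0 + (q.choose 2 : ℤ) * e 1 + (q : ℤ) * e 2 ∧
    ε 3 = e 3 :=
  stmt_17_general I e q hq ε hε
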